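/- arXiv:2512.11405 — 2 statements merged into one kernel-verified Lean document; each statement's English description precedes it below -/
import Mathlib

section
/- Define P_m(s) = ∑_{k=0}^m C(m,k) (-1)^k 2^{k+1} (s)_k / k!. For complex s with 0 < Re(s) < 1 and every integer m ≥ 1, |P_m(s)| ≤ e^{π|Im(s)|} ( Γ(Re(s)) / m^{Re(s)} + Γ(1-Re(s)) / m^{1-Re(s)} ). -/
open Real MeasureTheory Set

noncomputable def P (m : ℕ) (s : ℂ) : ℂ :=
  ∑ k ∈ Finset.range (m + 1),
    (m.choose k : ℂ) * (-1) ^ k * 2 ^ (k + 1) *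
      (∏ i ∈ Finset.range k, (s + i)) / (k.factorial : ℂ)

lemma myGamma_add_nat (s : ℂ) (hs : 0 < s.re) (k : ℕ) :
    Complex.Gamma (s + k) = (∏ i ∈ Finset.range k, (s + i)) * Complex.Gamma s := by
  induction k with
  | zero => simp
  | succ n ih =>
    have hne : s + n ≠ 0 := by
      intro h
      have : (s + n).re = 0 := by rw [h]; simp
      simp [Complex.add_re] at this
      have : (0:ℝ) ≤ (n:ℝ) := Nat.cast_nonneg n
      linarith
    have : s + (n+1 : ℕ) = (s + n) + 1 := by push_cast; ring
    rw [this, Complex.Gamma_add_one _ hne, ih, Finset.prod_range_succ]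
    ring

lemma myabs_sin_le (z : ℂ) : ‖Complex.sin z‖ ≤ Real.exp |z.im| := by
  rw [Complex.sin]
  calc ‖(Complex.exp (-z * Complex.I) - Complex.exp (z * Complex.I)) * Complex.I / 2‖
      ≤ (‖Complex.exp (-z * Complex.I)‖ + ‖Complex.exp (z * Complex.I)‖) / 2 := by
        rw [norm_div, norm_mul]
        simp only [Complex.norm_I, mul_one, Complex.norm_two]
        gcongr
        exact (norm_sub_le _ _)
    _ ≤ Real.exp |z.im| := by
        rw [Complex.norm_exp, Complex.norm_exp]
        have e1 : (-z * Complex.I).re = z.im := by simp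
        have e2 : (z * Complex.I).re = -z.im := by simp
        rw [e1, e2]
        have h1 : Real.exp (z.im) ≤ Real.exp |z.im| := Real.exp_le_exp.2 (le_abs_self _)
        have h2 : Real.exp (-z.im) ≤ Real.exp |z.im| := Real.exp_le_exp.2 (neg_le_abs _)
        linarith
lemma poch_beta (s : ℂ) (hs0 : 0 < s.re) (hs1 : s.re < 1) (k : ℕ) :
    (∏ i ∈ Finset.range k, (s + i)) / (k.factorial : ℂ)
      = Complex.sin (π * s) / π * Complex.betaIntegral (s + k) (1 - s) := by
  have h1s : 0 < (1 - s).re := by simp [Complex.sub_re, Complex.one_re]; linarith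
  have hsk : 0 < (s + (k:ℂ)).re := by
    simp [Complex.add_re]
    have : (0:ℝ) ≤ (k:ℝ) := Nat.cast_nonneg k
    linarith
  have hB := Complex.Gamma_mul_Gamma_eq_betaIntegral hsk h1s
  have he : s + (k:ℂ) + (1 - s) = ((k:ℕ) : ℂ) + 1 := by push_cast; ring
  rw [he, Complex.Gamma_nat_eq_factorial] at hB
  have hrefl := Complex.Gamma_mul_Gamma_one_sub s
  have hΓs : Complex.Gamma s ≠ 0 := Complex.Gamma_ne_zero_of_re_pos hs0
  have hΓ1s : Complex.Gamma (1-s) ≠ 0 := Complex.Gamma_ne_zero_of_re_pos h1s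
  have hsin : Complex.sin (π * s) ≠ 0 := by
    intro h
    rw [h, div_zero] at hrefl
    exact hΓs (by rcases mul_eq_zero.1 hrefl with h'|h'; exact h'; exact absurd h' hΓ1s)
  have hπ : (π : ℂ) ≠ 0 := by
    simp [Complex.ofReal_ne_zero]
  have hk : (k.factorial : ℂ) ≠ 0 := by
    exact_mod_cast Nat.cast_ne_zero.2 k.factorial_ne_zero
  rw [myGamma_add_nat s hs0 k] at hB
  rw [div_eq_iff hk]
  have hrefl' : Complex.Gamma s * Complex.Gamma (1 - s) * Complex.sin (π * s) = π := by
    rw [hrefl]; field_simp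
  -- hB : ∏ * Γ s * Γ(1-s) = k! * B ;  hrefl : Γ s * Γ (1-s) * sin = π
  rw [show Complex.sin (π * s) / π * Complex.betaIntegral (s + k) (1 - s) * k.factorial = Complex.sin (π * s) * (k.factorial * Complex.betaIntegral (s + k) (1 - s)) / π by ring, eq_div_iff hπ, ← hB]
  linear_combination - (∏ i ∈ Finset.range k, (s + i)) * hrefl'
lemma P_eq (s : ℂ) (hs0 : 0 < s.re) (hs1 : s.re < 1) (m : ℕ) :
    P m s = 2 * (Complex.sin (π * s) / π) *
      ∫ t in (0:ℝ)..1, (t:ℂ) ^ (s-1) * (1-(t:ℂ)) ^ (-s) * (1-2*(t:ℂ)) ^ m := by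
  have h1s : 0 < (1 - s).re := by simp [Complex.sub_re, Complex.one_re]; linarith
  have hsk : ∀ k : ℕ, 0 < (s + (k:ℂ)).re := by
    intro k
    simp [Complex.add_re]
    have : (0:ℝ) ≤ (k:ℝ) := Nat.cast_nonneg k
    linarith
  have hint : ∀ k : ℕ, IntervalIntegrable
      (fun t : ℝ => (m.choose k : ℂ) * (-2)^k * ((t:ℂ) ^ (s + k - 1) * (1-(t:ℂ)) ^ ((1-s) - 1)))
      volume 0 1 := fun k => (Complex.betaIntegral_convergent (hsk k) h1s).const_mul _
  calc P m s
      = ∑ k ∈ Finset.range (m+1), 2 * (Complex.sin (π * s) / π) *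
          ((m.choose k : ℂ) * (-2)^k * Complex.betaIntegral (s + k) (1 - s)) := by
        unfold P
        refine Finset.sum_congr rfl fun k _ => ?_
        rw [mul_div_assoc, poch_beta s hs0 hs1 k]
        rw [show ((-2:ℂ))^k = (-1)^k * 2^k by rw [← neg_one_mul, mul_pow]]
        ring
    _ = 2 * (Complex.sin (π * s) / π) * ∑ k ∈ Finset.range (m+1),
          ∫ t in (0:ℝ)..1, (m.choose k : ℂ) * (-2)^k *
            ((t:ℂ) ^ (s + k - 1) * (1-(t:ℂ)) ^ ((1-s) - 1)) := by
        rw [Finset.mul_sum]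
        refine Finset.sum_congr rfl fun k _ => ?_
        rw [Complex.betaIntegral, ← intervalIntegral.integral_const_mul]
    _ = 2 * (Complex.sin (π * s) / π) *
          ∫ t in (0:ℝ)..1, ∑ k ∈ Finset.range (m+1), (m.choose k : ℂ) * (-2)^k *
            ((t:ℂ) ^ (s + k - 1) * (1-(t:ℂ)) ^ ((1-s) - 1)) := by
        rw [← intervalIntegral.integral_finset_sum (fun k _ => hint k)]
    _ = 2 * (Complex.sin (π * s) / π) *
          ∫ t in (0:ℝ)..1, (t:ℂ) ^ (s-1) * (1-(t:ℂ)) ^ (-s) * (1-2*(t:ℂ)) ^ m := by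
        congr 1
        refine intervalIntegral.integral_congr_ae ?_
        filter_upwards with t ht
        rw [uIoc_of_le (by norm_num : (0:ℝ) ≤ 1)] at ht
        have ht0 : (t:ℂ) ≠ 0 := by
          exact_mod_cast ne_of_gt ht.1
        have hsub : (1:ℂ) - s - 1 = -s := by ring
        have hpow : ∀ k : ℕ, (t:ℂ) ^ (s + k - 1) = (t:ℂ) ^ (s-1) * (t:ℂ)^k := by
          intro k
          rw [show s + (k:ℂ) - 1 = (s-1) + k by ring, Complex.cpow_add _ _ ht0,
            Complex.cpow_natCast]
        simp only [hsub, hpow]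
        rw [show (1:ℂ) - 2*(t:ℂ) = (-2*(t:ℂ)) + 1 by ring, add_pow]
        rw [Finset.mul_sum]
        refine Finset.sum_congr rfl fun k _ => ?_
        rw [mul_pow]
        ring
lemma half_bound (τ : ℝ) (h0 : 0 < τ) (h1 : τ < 1) (m : ℕ) (hm : 1 ≤ m) :
    ∫ t in (0:ℝ)..(1/2:ℝ), t ^ (τ-1) * ((1-t) ^ (-τ) * |1-2*t| ^ m)
      ≤ Real.Gamma τ / (m:ℝ) ^ τ := by
  have hmpos : (0:ℝ) < m := by exact_mod_cast hm
  have hg_int : IntervalIntegrable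
      (fun t : ℝ => t ^ (τ-1) * ((1-t) ^ (-τ) * |1-2*t| ^ m)) volume 0 (1/2) := by
    apply (intervalIntegral.intervalIntegrable_rpow' (by linarith)).mul_continuousOn
    apply ContinuousOn.mul
    · apply ContinuousOn.rpow_const (by fun_prop)
      intro x hx
      rw [uIcc_of_le (by norm_num : (0:ℝ) ≤ 1/2)] at hx
      left
      have := hx.2
      intro h; rw [sub_eq_zero] at h; linarith
    · fun_prop
  have hh_int : IntervalIntegrable
      (fun t : ℝ => t ^ (τ-1) * ((2:ℝ) ^ τ * Real.exp (-(2*(m:ℝ)*t)))) volume 0 (1/2) := by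
    apply (intervalIntegral.intervalIntegrable_rpow' (by linarith)).mul_continuousOn
    fun_prop
  have hpt : ∀ t ∈ Icc (0:ℝ) (1/2:ℝ),
      t ^ (τ-1) * ((1-t) ^ (-τ) * |1-2*t| ^ m)
        ≤ t ^ (τ-1) * ((2:ℝ) ^ τ * Real.exp (-(2*(m:ℝ)*t))) := by
    rintro t ⟨ht0, ht2⟩
    rcases eq_or_lt_of_le ht0 with rfl | htpos
    · rw [Real.zero_rpow (by intro h; rw [sub_eq_zero] at h; linarith)]
      simp
    · have h1t : (1/2:ℝ) ≤ 1 - t := by linarith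
      apply mul_le_mul_of_nonneg_left _ (Real.rpow_nonneg htpos.le _)
      have hA : (1-t) ^ (-τ) ≤ (2:ℝ) ^ τ := by
        rw [Real.rpow_neg (by linarith), ← Real.inv_rpow (by linarith)]
        apply Real.rpow_le_rpow (by positivity) _ h0.le
        rw [inv_le_comm₀ (by linarith) (by norm_num)]
        linarith
      have hB : |1-2*t| ^ m ≤ Real.exp (-(2*(m:ℝ)*t)) := by
        have ha : |1-2*t| = 1-2*t := abs_of_nonneg (by linarith)
        have hb : 1-2*t ≤ Real.exp (-(2*t)) := by
          have := Real.add_one_le_exp (-(2*t)); linarith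
        calc |1-2*t| ^ m ≤ (Real.exp (-(2*t))) ^ m := by
              rw [ha]; exact pow_le_pow_left₀ (by linarith) hb m
          _ = Real.exp ((m:ℝ) * (-(2*t))) := (Real.exp_nat_mul _ m).symm
          _ = Real.exp (-(2*(m:ℝ)*t)) := by ring_nf
      exact mul_le_mul hA hB (by positivity) (by positivity)
  have step1 := intervalIntegral.integral_mono_on (by norm_num) hg_int hh_int hpt
  refine step1.trans ?_
  have base : IntegrableOn (fun x : ℝ => x ^ (τ-1) * Real.exp (-(2*(m:ℝ))*x)) (Ioi 0) := by
    have := integrableOn_rpow_mul_exp_neg_mul_rpow (by linarith : (-1:ℝ) < τ-1)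
      (by norm_num : (0:ℝ) < 1) (by positivity : (0:ℝ) < 2*(m:ℝ))
    refine this.congr_fun (fun x hx => ?_) measurableSet_Ioi
    simp only [Real.rpow_one]
  have hIoi : IntegrableOn
      (fun t : ℝ => t ^ (τ-1) * ((2:ℝ) ^ τ * Real.exp (-(2*(m:ℝ)*t)))) (Ioi 0) := by
    have h2 : IntegrableOn (fun x : ℝ => (2:ℝ)^τ * (x ^ (τ-1) * Real.exp (-(2*(m:ℝ))*x))) (Ioi 0) :=
      base.const_mul ((2:ℝ) ^ τ)
    refine IntegrableOn.congr_fun h2 (fun x hx => ?_) measurableSet_Ioi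
    rw [show -(2*(m:ℝ))*x = -(2*(m:ℝ)*x) by ring]
    ring
  have step2 : (∫ t in (0:ℝ)..(1/2:ℝ), t ^ (τ-1) * ((2:ℝ) ^ τ * Real.exp (-(2*(m:ℝ)*t))))
      ≤ ∫ t in Ioi (0:ℝ), t ^ (τ-1) * ((2:ℝ) ^ τ * Real.exp (-(2*(m:ℝ)*t))) := by
    rw [intervalIntegral.integral_of_le (by norm_num : (0:ℝ) ≤ 1/2)]
    apply setIntegral_mono_set hIoi
    · filter_upwards [ae_restrict_mem measurableSet_Ioi] with x hx
      have : (0:ℝ) < x := hx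
      positivity
    · exact HasSubset.Subset.eventuallyLE Ioc_subset_Ioi_self
  refine step2.trans ?_
  have : (∫ t in Ioi (0:ℝ), t ^ (τ-1) * ((2:ℝ) ^ τ * Real.exp (-(2*(m:ℝ)*t))))
      = (2:ℝ) ^ τ * ∫ t in Ioi (0:ℝ), t ^ (τ-1) * Real.exp (-(2*(m:ℝ)*t)) := by
    rw [← integral_const_mul]
    congr 1; funext t; ring
  rw [this, integral_rpow_mul_exp_neg_mul_Ioi h0 (by positivity : (0:ℝ) < 2*(m:ℝ))]
  rw [← mul_assoc, ← Real.mul_rpow (by norm_num) (by positivity)]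
  rw [show (2:ℝ) * (1/(2*(m:ℝ))) = ((m:ℝ))⁻¹ by field_simp]
  rw [Real.inv_rpow (by positivity), ← one_div, div_mul_eq_mul_div, one_mul]

theorem stmt_4 (s : ℂ) (hs0 : 0 < s.re) (hs1 : s.re < 1) (m : ℕ) (hm : 1 ≤ m) :
    ‖P m s‖ ≤
      Real.exp (π * |s.im|) *
        (Real.Gamma s.re / (m : ℝ) ^ s.re +
          Real.Gamma (1 - s.re) / (m : ℝ) ^ (1 - s.re)) := by
  have hπpos := Real.pi_pos
  have h1s : 0 < (1 - s).re := by simp [Complex.sub_re, Complex.one_re]; linarith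
  set f : ℝ → ℂ := fun t => (t:ℂ) ^ (s-1) * (1-(t:ℂ)) ^ (-s) * (1-2*(t:ℂ)) ^ m with hfdef
  have hf_int : IntervalIntegrable f volume 0 1 := by
    have hb := Complex.betaIntegral_convergent hs0 h1s
    have hc : ContinuousOn (fun t : ℝ => ((1:ℂ)-2*(t:ℂ)) ^ m) (uIcc (0:ℝ) 1) := by fun_prop
    have h2 := hb.mul_continuousOn hc
    simpa [hfdef, show (1:ℂ)-s-1 = -s by ring, mul_assoc] using h2
  set G : ℝ → ℝ → ℝ := fun τ t => t ^ (τ-1) * ((1-t) ^ (-τ) * |1-2*t| ^ m) with hGdef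
  have hfg : ∀ t ∈ Icc (0:ℝ) 1, ‖f t‖ = G s.re t := by
    rintro t ⟨ht0, ht1⟩
    have e1 : ‖(t:ℂ) ^ (s-1)‖ = t ^ (s.re - 1) := by
      rw [Complex.norm_cpow_eq_rpow_re_of_nonneg ht0
        (by simp [Complex.sub_re, Complex.one_re]; intro h; linarith)]
      simp [Complex.sub_re, Complex.one_re]
    have e2 : ‖(1-(t:ℂ)) ^ (-s)‖ = (1-t) ^ (-s.re) := by
      rw [show (1:ℂ)-(t:ℂ) = (((1-t : ℝ)):ℂ) by push_cast; ring]
      rw [Complex.norm_cpow_eq_rpow_re_of_nonneg (by linarith)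
        (by simp [Complex.neg_re]; linarith)]
      simp [Complex.neg_re]
    have e3 : ‖(1-2*(t:ℂ)) ^ m‖ = |1-2*t| ^ m := by
      rw [norm_pow, show (1:ℂ)-2*(t:ℂ) = (((1-2*t : ℝ)):ℂ) by push_cast; ring,
        Complex.norm_real]
      rfl
    rw [hfdef]
    simp only [norm_mul]
    rw [e1, e2, e3, hGdef]
    ring
  have hsub1 : uIcc (0:ℝ) (1/2) ⊆ uIcc (0:ℝ) 1 := by
    rw [uIcc_of_le (by norm_num : (0:ℝ) ≤ 1/2), uIcc_of_le (by norm_num : (0:ℝ) ≤ 1)]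
    exact Icc_subset_Icc le_rfl (by norm_num)
  have hsub2 : uIcc (1/2:ℝ) 1 ⊆ uIcc (0:ℝ) 1 := by
    rw [uIcc_of_le (by norm_num : (1/2:ℝ) ≤ 1), uIcc_of_le (by norm_num : (0:ℝ) ≤ 1)]
    exact Icc_subset_Icc (by norm_num) le_rfl
  have key : (∫ t in (0:ℝ)..1, ‖f t‖)
      = (∫ t in (0:ℝ)..(1/2:ℝ), G s.re t) + ∫ t in (0:ℝ)..(1/2:ℝ), G (1-s.re) t := by
    rw [← intervalIntegral.integral_add_adjacent_intervals
      (hf_int.norm.mono_set hsub1) (hf_int.norm.mono_set hsub2)]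
    congr 1
    · refine intervalIntegral.integral_congr fun t ht => hfg t ?_
      rw [uIcc_of_le (by norm_num : (0:ℝ) ≤ 1/2)] at ht
      exact ⟨ht.1, by linarith [ht.2]⟩
    · rw [intervalIntegral.integral_congr (g := G s.re) (fun t ht => hfg t (by
        rw [uIcc_of_le (by norm_num : (1/2:ℝ) ≤ 1)] at ht
        exact ⟨by linarith [ht.1], ht.2⟩))]
      rw [show (∫ x in (1/2:ℝ)..(1:ℝ), G s.re x) = ∫ x in (0:ℝ)..(1/2:ℝ), G s.re (1-x) by
        rw [intervalIntegral.integral_comp_sub_left (G s.re) 1]; norm_num]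
      refine intervalIntegral.integral_congr fun x _ => ?_
      rw [hGdef]
      simp only
      rw [show (1:ℝ)-2*(1-x) = -(1-2*x) by ring, abs_neg,
        show s.re - 1 = -(1-s.re) by ring, show -s.re = (1-s.re)-1 by ring]
      ring_nf
  have hI1pos : 0 ≤ ∫ t in (0:ℝ)..(1/2:ℝ), G s.re t := by
    apply intervalIntegral.integral_nonneg (by norm_num)
    rintro u ⟨hu0, hu2⟩
    rw [hGdef]
    have h1u : (0:ℝ) ≤ 1 - u := by linarith
    exact mul_nonneg (Real.rpow_nonneg hu0 _)
      (mul_nonneg (Real.rpow_nonneg h1u _) (pow_nonneg (abs_nonneg _) _))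
  have hI2pos : 0 ≤ ∫ t in (0:ℝ)..(1/2:ℝ), G (1-s.re) t := by
    apply intervalIntegral.integral_nonneg (by norm_num)
    rintro u ⟨hu0, hu2⟩
    rw [hGdef]
    have h1u : (0:ℝ) ≤ 1 - u := by linarith
    exact mul_nonneg (Real.rpow_nonneg hu0 _)
      (mul_nonneg (Real.rpow_nonneg h1u _) (pow_nonneg (abs_nonneg _) _))
  have hA := half_bound s.re hs0 hs1 m hm
  have hB := half_bound (1-s.re) (by linarith) (by linarith) m hm
  have hsin : ‖Complex.sin ((π:ℂ) * s)‖ ≤ Real.exp (π * |s.im|) := by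
    have h := myabs_sin_le ((π:ℂ) * s)
    have him : ((π:ℂ) * s).im = π * s.im := by
      simp [Complex.mul_im]
    rw [him, abs_mul, abs_of_pos hπpos] at h
    exact h
  have hC : (0:ℝ) ≤ Real.Gamma s.re / (m : ℝ) ^ s.re +
      Real.Gamma (1 - s.re) / (m : ℝ) ^ (1 - s.re) := by
    have h1 := Real.Gamma_pos_of_pos hs0
    have h2 := Real.Gamma_pos_of_pos (by linarith : (0:ℝ) < 1 - s.re)
    have hmpos : (0:ℝ) < m := by exact_mod_cast hm
    positivity
  calc ‖P m s‖
      = 2 * ‖Complex.sin ((π:ℂ) * s)‖ / π *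
          ‖∫ t in (0:ℝ)..1, f t‖ := by
        rw [P_eq s hs0 hs1 m, norm_mul, norm_mul, norm_div]
        rw [Complex.norm_two, Complex.norm_real, Real.norm_eq_abs, abs_of_pos hπpos]
        ring
    _ ≤ 2 * ‖Complex.sin ((π:ℂ) * s)‖ / π * ∫ t in (0:ℝ)..1, ‖f t‖ := by
        apply mul_le_mul_of_nonneg_left _ (by positivity)
        exact intervalIntegral.norm_integral_le_integral_norm zero_le_one
    _ = 2 * ‖Complex.sin ((π:ℂ) * s)‖ / π *
          ((∫ t in (0:ℝ)..(1/2:ℝ), G s.re t) + ∫ t in (0:ℝ)..(1/2:ℝ), G (1-s.re) t) := by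
        rw [key]
    _ ≤ 2 * Real.exp (π * |s.im|) / π *
          (Real.Gamma s.re / (m : ℝ) ^ s.re +
            Real.Gamma (1 - s.re) / (m : ℝ) ^ (1 - s.re)) := by
        have h1 : 2 * ‖Complex.sin ((π:ℂ)*s)‖ / π
            ≤ 2 * Real.exp (π*|s.im|) / π := by gcongr
        exact mul_le_mul h1 (add_le_add hA hB) (by linarith [hI1pos, hI2pos]) (by positivity)
    _ ≤ Real.exp (π * |s.im|) *
          (Real.Gamma s.re / (m : ℝ) ^ s.re +
            Real.Gamma (1 - s.re) / (m : ℝ) ^ (1 - s.re)) := by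
        have h2π : 2 ≤ π := by linarith [Real.pi_gt_three]
        have hE := Real.exp_pos (π * |s.im|)
        rw [div_mul_eq_mul_div, div_le_iff₀ hπpos]
        nlinarith [mul_nonneg hE.le hC]
end

section
/- For every m ≥ 1, all roots of the polynomial P_m(s) = ∑_{k=0}^m C(m,k) (-1)^k 2^{k+1} (s)_k / k! lie on the critical line {s : Re(s) = 1/2}. -/
open Finset Complex


/-- Monic Meixner–Pollaczek-type polynomials: p₀=1, p₁=t, p_{n+2}=t p_{n+1} - (n+1)² p_n. -/
noncomputable def pj : ℕ → ℂ → ℂ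
  | 0, _ => 1
  | 1, t => t
  | (n+2), t => t * pj (n+1) t - (((n+1)^2 : ℕ) : ℂ) * pj n t

lemma cb (n k : ℕ) : ((n:ℂ) - k) * (n.choose k) = ((k:ℂ)+1) * (n.choose (k+1)) := by
  rcases le_or_gt k n with hle | hlt
  · have h1 := Nat.choose_succ_right_eq n k
    have h2 : ((n.choose (k+1) * (k+1) : ℕ) : ℂ) = ((n.choose k * (n - k) : ℕ) : ℂ) := by
      exact_mod_cast congrArg (Nat.cast : ℕ → ℂ) h1
    push_cast [Nat.cast_sub hle] at h2
    linear_combination -h2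
  · have h1 : n.choose k = 0 := Nat.choose_eq_zero_of_lt hlt
    have h2 : n.choose (k+1) = 0 := Nat.choose_eq_zero_of_lt (lt_trans hlt (Nat.lt_succ_self k))
    simp [h1, h2]

lemma ca (n k : ℕ) : ((n:ℂ) + 1 - k) * ((n+1).choose k) = ((n:ℂ)+1) * (n.choose k) := by
  have h1 := cb (n+1) k
  have h2 : (((n+1).choose (k+1) * (k+1) : ℕ) : ℂ) = (((n+1) * n.choose k : ℕ) : ℂ) := by
    exact_mod_cast congrArg (Nat.cast : ℕ → ℂ) (Nat.add_one_mul_choose_eq n k).symm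
  push_cast at h1 h2
  linear_combination h1 + h2

lemma key (m k : ℕ) : ((m:ℂ)+2) * ((m+2).choose k)
    = (1+2*(k:ℂ)) * ((m+1).choose k) + (k:ℂ) * ((m+1).choose (k-1))
      + ((m:ℂ)+1) * (m.choose k) := by
  cases k with
  | zero => simp; ring
  | succ j =>
    have hp : (m+2).choose (j+1) = (m+1).choose j + (m+1).choose (j+1) :=
      Nat.choose_succ_succ _ _
    have h1 := cb (m+1) j
    have h2 := ca m (j+1)
    rw [hp]
    simp only [Nat.add_sub_cancel]
    push_cast at h1 h2 ⊢
    linear_combination h1 + h2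

lemma recP (s : ℂ) (m : ℕ) :
    ((m:ℂ)+2) * P (m+2) s = (1 - 2*s) * P (m+1) s + ((m:ℂ)+1) * P m s := by
  set e : ℕ → ℂ := fun k => (-2)^k * (∏ i ∈ Finset.range k, (s + (i:ℂ))) / (k.factorial : ℂ)
    with he
  have hPe : ∀ n, P n s = 2 * ∑ k ∈ Finset.range (n+1), ((n.choose k : ℂ)) * e k := by
    intro n
    rw [P, Finset.mul_sum]
    refine Finset.sum_congr rfl fun k _ => ?_
    simp only [he]
    rw [show ((-2:ℂ))^k = (-1)^k * 2^k by rw [← neg_one_mul]; rw [mul_pow]]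
    ring
  have hL1 : ∀ k : ℕ, ((k:ℂ)+1) * e (k+1) = (-(2*s) - 2*(k:ℂ)) * e k := by
    intro k
    have hfact : (((k+1).factorial : ℕ) : ℂ) = ((k:ℂ)+1) * (k.factorial : ℂ) := by
      rw [Nat.factorial_succ]; push_cast; ring
    have hprod : (∏ i ∈ Finset.range (k+1), (s+(i:ℂ)))
        = (∏ i ∈ Finset.range k, (s+(i:ℂ))) * (s+(k:ℂ)) := Finset.prod_range_succ _ _
    have hk : ((k.factorial : ℂ)) ≠ 0 := Nat.cast_ne_zero.mpr (Nat.factorial_ne_zero k)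
    have hk1 : ((k:ℂ)+1) ≠ 0 := by
      have h9 : (((k+1 : ℕ)) : ℂ) ≠ 0 := Nat.cast_ne_zero.mpr (Nat.succ_ne_zero k)
      push_cast at h9; exact h9
    simp only [he]
    rw [hprod, hfact, pow_succ]
    field_simp
    ring
  have hmuls : ∀ k : ℕ, -(2*s) * e k = ((k:ℂ)+1) * e (k+1) + 2*(k:ℂ) * e k := by
    intro k; linear_combination -(hL1 k)
  have hshift : ∑ k ∈ Finset.range (m+2), (((m+1).choose k : ℂ)) * (((k:ℂ)+1) * e (k+1))
      = ∑ k ∈ Finset.range (m+3), (k:ℂ) * (((m+1).choose (k-1) : ℂ)) * e k := by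
    rw [Finset.sum_range_succ' (fun k => (k:ℂ) * (((m+1).choose (k-1) : ℂ)) * e k) (m+2)]
    simp only [Nat.add_sub_cancel, Nat.cast_zero, zero_mul, add_zero, Nat.cast_add,
      Nat.cast_one]
    refine Finset.sum_congr rfl fun k _ => ?_
    ring
  have hext2 : ∑ k ∈ Finset.range (m+2), 2*(k:ℂ) * (((m+1).choose k : ℂ)) * e k
      = ∑ k ∈ Finset.range (m+3), 2*(k:ℂ) * (((m+1).choose k : ℂ)) * e k := by
    rw [Finset.sum_range_succ (fun k => 2*(k:ℂ) * (((m+1).choose k : ℂ)) * e k) (m+2)]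
    rw [Nat.choose_eq_zero_of_lt (by omega)]
    simp
  have hext1 : ∑ k ∈ Finset.range (m+2), (((m+1).choose k : ℂ)) * e k
      = ∑ k ∈ Finset.range (m+3), (((m+1).choose k : ℂ)) * e k := by
    rw [Finset.sum_range_succ (fun k => (((m+1).choose k : ℂ)) * e k) (m+2)]
    rw [Nat.choose_eq_zero_of_lt (by omega)]
    simp
  have hext0 : ∑ k ∈ Finset.range (m+1), ((m.choose k : ℂ)) * e k
      = ∑ k ∈ Finset.range (m+3), ((m.choose k : ℂ)) * e k := by
    rw [Finset.sum_range_succ (fun k => ((m.choose k : ℂ)) * e k) (m+2),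
      Finset.sum_range_succ (fun k => ((m.choose k : ℂ)) * e k) (m+1)]
    rw [Nat.choose_eq_zero_of_lt (by omega), Nat.choose_eq_zero_of_lt (by omega)]
    simp
  have h2s : ∑ k ∈ Finset.range (m+2), (((m+1).choose k : ℂ)) * (-(2*s) * e k)
      = ∑ k ∈ Finset.range (m+3),
          ((k:ℂ) * (((m+1).choose (k-1) : ℂ)) + 2*(k:ℂ) * (((m+1).choose k : ℂ))) * e k := by
    calc ∑ k ∈ Finset.range (m+2), (((m+1).choose k : ℂ)) * (-(2*s) * e k)
        = ∑ k ∈ Finset.range (m+2), ((((m+1).choose k : ℂ)) * (((k:ℂ)+1) * e (k+1))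
            + 2*(k:ℂ) * (((m+1).choose k : ℂ)) * e k) := by
          refine Finset.sum_congr rfl fun k _ => ?_
          rw [hmuls k]; ring
      _ = (∑ k ∈ Finset.range (m+2), (((m+1).choose k : ℂ)) * (((k:ℂ)+1) * e (k+1)))
            + ∑ k ∈ Finset.range (m+2), 2*(k:ℂ) * (((m+1).choose k : ℂ)) * e k :=
          Finset.sum_add_distrib
      _ = (∑ k ∈ Finset.range (m+3), (k:ℂ) * (((m+1).choose (k-1) : ℂ)) * e k)
            + ∑ k ∈ Finset.range (m+3), 2*(k:ℂ) * (((m+1).choose k : ℂ)) * e k := by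
          rw [hshift, hext2]
      _ = _ := by
          rw [← Finset.sum_add_distrib]
          refine Finset.sum_congr rfl fun k _ => ?_
          ring
  rw [hPe (m+2), hPe (m+1), hPe m]
  have hgoal : ((m:ℂ)+2) * ∑ k ∈ Finset.range (m+3), (((m+2).choose k : ℂ)) * e k
      = (1 - 2*s) * ∑ k ∈ Finset.range (m+2), (((m+1).choose k : ℂ)) * e k
        + ((m:ℂ)+1) * ∑ k ∈ Finset.range (m+1), ((m.choose k : ℂ)) * e k := by
    have hrhs : (1 - 2*s) * ∑ k ∈ Finset.range (m+2), (((m+1).choose k : ℂ)) * e k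
        = (∑ k ∈ Finset.range (m+2), (((m+1).choose k : ℂ)) * e k)
          + ∑ k ∈ Finset.range (m+2), (((m+1).choose k : ℂ)) * (-(2*s) * e k) := by
      rw [Finset.mul_sum, ← Finset.sum_add_distrib]
      refine Finset.sum_congr rfl fun k _ => ?_
      ring
    rw [hrhs, h2s, hext1, hext0, Finset.mul_sum, Finset.mul_sum,
      ← Finset.sum_add_distrib, ← Finset.sum_add_distrib]
    refine Finset.sum_congr rfl fun k _ => ?_
    have hk := key m k
    linear_combination e k * hk
  calc ((m:ℂ)+2) * (2 * ∑ k ∈ Finset.range (m+2+1), (((m+2).choose k : ℂ)) * e k)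
      = 2 * (((m:ℂ)+2) * ∑ k ∈ Finset.range (m+3), (((m+2).choose k : ℂ)) * e k) := by ring
    _ = 2 * ((1 - 2*s) * ∑ k ∈ Finset.range (m+2), (((m+1).choose k : ℂ)) * e k
        + ((m:ℂ)+1) * ∑ k ∈ Finset.range (m+1), ((m.choose k : ℂ)) * e k) := by rw [hgoal]
    _ = _ := by ring

lemma keyP (s : ℂ) : ∀ n, (n.factorial : ℂ) * P n s = 2 * I^n * pj n (I*(2*s-1)) := by
  have base0 : P 0 s = 2 := by simp [P]
  have base1 : P 1 s = 2 - 4*s := by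
    simp [P, Finset.sum_range_succ]
    ring
  intro n
  induction n using Nat.twoStepInduction with
  | zero => simp [pj, base0]
  | one =>
    simp only [Nat.factorial_one, Nat.cast_one, one_mul, base1, pow_one]
    show 2 - 4*s = 2 * I * pj 1 (I*(2*s-1))
    rw [show pj 1 (I*(2*s-1)) = I*(2*s-1) from rfl]
    have hI : (I:ℂ)^2 = -1 := I_sq
    linear_combination (2 - 4*s) * hI
  | more n ih1 ih2 =>
    have hr := recP s n
    have hfac : ((n+2).factorial : ℂ) = ((n:ℂ)+2) * ((n+1).factorial : ℂ) := by
      rw [Nat.factorial_succ]; push_cast; ring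
    have hfac1 : ((n+1).factorial : ℂ) = ((n:ℂ)+1) * (n.factorial : ℂ) := by
      rw [Nat.factorial_succ]; push_cast; ring
    have hpj : pj (n+2) (I*(2*s-1))
        = I*(2*s-1) * pj (n+1) (I*(2*s-1)) - (((n+1)^2 : ℕ) : ℂ) * pj n (I*(2*s-1)) := rfl
    have hI : (I:ℂ)^2 = -1 := I_sq
    have hIp2 : (I:ℂ)^(n+2) = I^n * I^2 := by ring
    have hIp1 : (I:ℂ)^(n+1) = I^n * I := by ring
    rw [hfac, hpj, hIp2, hI]
    calc ((n:ℂ)+2) * ((n+1).factorial : ℂ) * P (n+2) s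
        = ((n+1).factorial : ℂ) * (((n:ℂ)+2) * P (n+2) s) := by ring
      _ = ((n+1).factorial : ℂ) * ((1 - 2*s) * P (n+1) s + ((n:ℂ)+1) * P n s) := by rw [hr]
      _ = (1 - 2*s) * (((n+1).factorial : ℂ) * P (n+1) s)
          + ((n:ℂ)+1)^2 * ((n.factorial : ℂ) * P n s) := by rw [hfac1]; ring
      _ = (1 - 2*s) * (2 * I^(n+1) * pj (n+1) (I*(2*s-1)))
          + ((n:ℂ)+1)^2 * (2 * I^n * pj n (I*(2*s-1))) := by rw [ih2, ih1]
      _ = _ := by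
        rw [hIp1]
        push_cast
        ring

lemma Tpos (t : ℂ) (ht : 0 < t.im) :
    ∀ n, 0 < (pj (n+1) t * (starRingEnd ℂ) (pj n t)).im := by
  intro n
  induction n with
  | zero =>
    show 0 < (pj 1 t * (starRingEnd ℂ) (pj 0 t)).im
    simp [pj, ht]
  | succ k ih =>
    show 0 < (pj (k+2) t * (starRingEnd ℂ) (pj (k+1) t)).im
    rw [show pj (k+2) t = t * pj (k+1) t - (((k+1)^2 : ℕ) : ℂ) * pj k t from rfl]
    have hc : (0:ℝ) < (((k+1)^2 : ℕ) : ℝ) := by positivity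
    set A := pj (k+1) t with hA
    set B := pj k t with hB
    have ih' : 0 < A.im * B.re - A.re * B.im := by
      have := ih
      simp only [Complex.mul_im, Complex.conj_re, Complex.conj_im] at this
      nlinarith [this]
    have hexp : ((t * A - (((k+1)^2 : ℕ) : ℂ) * B) * (starRingEnd ℂ) A).im
        = t.im * (A.re^2 + A.im^2) + (((k+1)^2 : ℕ) : ℝ) * (A.im * B.re - A.re * B.im) := by
      simp only [Complex.mul_im, Complex.mul_re, Complex.sub_im, Complex.sub_re,
        Complex.conj_re, Complex.conj_im, Complex.natCast_re, Complex.natCast_im]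
      ring
    rw [hexp]
    nlinarith [sq_nonneg A.re, sq_nonneg A.im, mul_pos hc ih',
      mul_nonneg ht.le (add_nonneg (sq_nonneg A.re) (sq_nonneg A.im))]

lemma Tneg (t : ℂ) (ht : t.im < 0) :
    ∀ n, (pj (n+1) t * (starRingEnd ℂ) (pj n t)).im < 0 := by
  intro n
  induction n with
  | zero =>
    show (pj 1 t * (starRingEnd ℂ) (pj 0 t)).im < 0
    simp [pj, ht]
  | succ k ih =>
    show (pj (k+2) t * (starRingEnd ℂ) (pj (k+1) t)).im < 0
    rw [show pj (k+2) t = t * pj (k+1) t - (((k+1)^2 : ℕ) : ℂ) * pj k t from rfl]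
    have hc : (0:ℝ) < (((k+1)^2 : ℕ) : ℝ) := by positivity
    set A := pj (k+1) t with hA
    set B := pj k t with hB
    have ih' : A.im * B.re - A.re * B.im < 0 := by
      have := ih
      simp only [Complex.mul_im, Complex.conj_re, Complex.conj_im] at this
      nlinarith [this]
    have hexp : ((t * A - (((k+1)^2 : ℕ) : ℂ) * B) * (starRingEnd ℂ) A).im
        = t.im * (A.re^2 + A.im^2) + (((k+1)^2 : ℕ) : ℝ) * (A.im * B.re - A.re * B.im) := by
      simp only [Complex.mul_im, Complex.mul_re, Complex.sub_im, Complex.sub_re,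
        Complex.conj_re, Complex.conj_im, Complex.natCast_re, Complex.natCast_im]
      ring
    rw [hexp]
    nlinarith [sq_nonneg A.re, sq_nonneg A.im, mul_pos hc (neg_pos.mpr ih'),
      mul_nonneg (neg_nonneg.mpr ht.le) (add_nonneg (sq_nonneg A.re) (sq_nonneg A.im))]


theorem stmt_16 (m : ℕ) (hm : 1 ≤ m) (s : ℂ) (h : P m s = 0) : s.re = 1 / 2 := by
  obtain ⟨n, rfl⟩ : ∃ n, m = n + 1 := ⟨m - 1, by omega⟩
  have hk := keyP s (n+1)
  rw [h, mul_zero] at hk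
  have hIne : (I:ℂ)^(n+1) ≠ 0 := pow_ne_zero _ I_ne_zero
  have h0 : pj (n+1) (I*(2*s-1)) = 0 := by
    rcases mul_eq_zero.mp hk.symm with h1 | h1
    · rcases mul_eq_zero.mp h1 with h2 | h2
      · norm_num at h2
      · exact absurd h2 hIne
    · exact h1
  have htim : (I*(2*s-1)).im = 0 := by
    by_contra hne
    rcases lt_or_gt_of_ne hne with hlt | hgt
    · have := Tneg (I*(2*s-1)) hlt n
      rw [h0] at this
      simp at this
    · have := Tpos (I*(2*s-1)) hgt n
      rw [h0] at this
      simp at this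
  have hcomp : (I*(2*s-1)).im = 2 * s.re - 1 := by
    simp [Complex.mul_im, Complex.sub_re, Complex.mul_re, Complex.I_re, Complex.I_im]
  rw [hcomp] at htim
  linarith
end
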